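/- With notation as in the linear-Gaussian setting ($b_\theta = m$, $K_\theta K_\theta^\top = C$, $\Sigma_\phi$, $K_\phi$ as above, and $b_\phi = \Sigma_\phi K_\theta^\top[-\sigma^{-2} A^\top A m + \tau^{-2}(I - KA)m - \tau^{-2} m]$), the expected one-step reconstruction satisfies $K_\theta(K_\phi y + b_\phi) + b_\theta = m + K(y - Am)$ for every $y \in \mathbb{R}^m$, i.e., it equals the exact Bayesian posterior mean $\mathbb{E}[x \mid y]$. -/

import Mathlib

open Matrix

/-!
Write `C = Kθ Kθᵀ` and `B = A Kθ`. The Kalman gain then factors as `K = Kθ X` with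
`X = Bᵀ (B Bᵀ + σ² I)⁻¹`, and the push-through identity `(σ² I + Bᵀ B) Bᵀ = Bᵀ (B Bᵀ + σ² I)`
shows that the precision matrix `Σ_φ⁻¹ = I + τ⁻² Kθᵀ Kθ + σ⁻² Bᵀ B` maps `X` to
`Kθᵀ (σ⁻² Aᵀ + τ⁻² K)`. Hence `K_φ = X` and `Kθ K_φ = K`; the bias is `b_φ = -K_φ A m`, so the
reconstruction is `K y - K A m + m`.
-/

namespace Matrix

section Field

variable {R : Type*} [Field R] {m n k : Type*} [Fintype m] [Fintype n] [Fintype k]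
  [DecidableEq m]

noncomputable def kalmanGain (C : Matrix n n R) (A : Matrix m n R) (s : R) : Matrix n m R :=
  C * Aᵀ * (A * C * Aᵀ + s • 1)⁻¹

lemma kalmanGain_mul_transpose_self (L : Matrix n k R) (A : Matrix m n R) (s : R) :
    kalmanGain (L * Lᵀ) A s = L * ((A * L)ᵀ * ((A * L) * (A * L)ᵀ + s • 1)⁻¹) := by
  simp only [kalmanGain, transpose_mul, Matrix.mul_assoc]

lemma one_add_smul_transpose_mul_self_mul_transpose_mul_inv [DecidableEq n]
    (B : Matrix m n R) {s : R} (hs : s ≠ 0) (hS : IsUnit (B * Bᵀ + s • 1).det) :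
    (1 + s⁻¹ • (Bᵀ * B)) * (Bᵀ * (B * Bᵀ + s • 1)⁻¹) = s⁻¹ • Bᵀ := by
  have push_through : (1 + s⁻¹ • (Bᵀ * B)) * Bᵀ = s⁻¹ • (Bᵀ * (B * Bᵀ + s • 1)) := by
    simp only [Matrix.add_mul, Matrix.mul_add, Matrix.one_mul, Matrix.smul_mul, Matrix.mul_smul,
      Matrix.mul_one, Matrix.mul_assoc, smul_add, smul_smul, inv_mul_cancel₀ hs, one_smul]
    abel
  rw [← Matrix.mul_assoc, push_through, Matrix.smul_mul, mul_nonsing_inv_cancel_right _ _ hS]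

end Field

variable {m n k : Type*} [Fintype m] [Fintype n] [Fintype k] [DecidableEq k]

lemma posDef_mul_transpose_add_smul_one [DecidableEq m] (B : Matrix m n ℝ) {s : ℝ}
    (hs : 0 < s) :
    (B * Bᵀ + s • 1).PosDef :=
  PosDef.posSemidef_add (by simpa using posSemidef_self_mul_conjTranspose B)
    (PosDef.one.smul hs)

lemma posDef_one_add_smul_transpose_mul_self_add_smul (L : Matrix n k ℝ) (B : Matrix m k ℝ)
    {a c : ℝ} (ha : 0 ≤ a) (hc : 0 ≤ c) :
    (1 + c • (Lᵀ * L) + a • (Bᵀ * B)).PosDef := by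
  have hL : (Lᵀ * L).PosSemidef := by simpa using posSemidef_conjTranspose_mul_self L
  have hB : (Bᵀ * B).PosSemidef := by simpa using posSemidef_conjTranspose_mul_self B
  exact (PosDef.one.add_posSemidef (hL.smul hc)).add_posSemidef (hB.smul ha)

theorem mul_inv_mul_transpose_mul_eq_kalmanGain [DecidableEq m] (L : Matrix n k ℝ)
    (A : Matrix m n ℝ) {s c : ℝ} (hs : 0 < s) (hc : 0 ≤ c) :
    L * ((1 + c • (Lᵀ * L) + s⁻¹ • (Lᵀ * Aᵀ * A * L))⁻¹ * Lᵀ *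
      (s⁻¹ • Aᵀ + c • kalmanGain (L * Lᵀ) A s)) = kalmanGain (L * Lᵀ) A s := by
  set B := A * L
  set X := Bᵀ * (B * Bᵀ + s • 1)⁻¹
  have hK : kalmanGain (L * Lᵀ) A s = L * X := kalmanGain_mul_transpose_self L A s
  have hBB : Lᵀ * Aᵀ * A * L = Bᵀ * B := by simp only [B, transpose_mul, Matrix.mul_assoc]
  set M := 1 + c • (Lᵀ * L) + s⁻¹ • (Bᵀ * B)
  have hM : IsUnit M.det := isUnit_iff_isUnit_det _ |>.mp
    (posDef_one_add_smul_transpose_mul_self_add_smul L B (inv_nonneg.mpr hs.le) hc).isUnit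
  have hS : IsUnit (B * Bᵀ + s • 1).det :=
    isUnit_iff_isUnit_det _ |>.mp (posDef_mul_transpose_add_smul_one B hs).isUnit
  have hMX : M * X = Lᵀ * (s⁻¹ • Aᵀ + c • (L * X)) := by
    have h := one_add_smul_transpose_mul_self_mul_transpose_mul_inv B hs.ne' hS
    calc M * X = (1 + s⁻¹ • (Bᵀ * B)) * X + c • (Lᵀ * L * X) := by
          simp only [M, Matrix.add_mul, Matrix.smul_mul]; abel
      _ = Lᵀ * (s⁻¹ • Aᵀ + c • (L * X)) := by
          rw [h, Matrix.mul_add, Matrix.mul_smul, Matrix.mul_smul, Matrix.mul_assoc]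
          simp only [B, transpose_mul]
  rw [hBB, hK, Matrix.mul_assoc, ← hMX, nonsing_inv_mul_cancel_left _ _ hM]

end Matrix

theorem stmt15_general {d m' : ℕ} (C : Matrix (Fin d) (Fin d) ℝ)
    (A : Matrix (Fin m') (Fin d) ℝ) (σ τ : ℝ) (hσ : 0 < σ)
    (m : Fin d → ℝ)
    (Kθ : Matrix (Fin d) (Fin d) ℝ)
    (hKθC : Kθ * Kθᵀ = C)
    (K : Matrix (Fin d) (Fin m') ℝ)
    (hK : K = C * Aᵀ * (A * C * Aᵀ + σ ^ 2 • (1 : Matrix (Fin m') (Fin m') ℝ))⁻¹)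
    (Sφ : Matrix (Fin d) (Fin d) ℝ)
    (hSφ : Sφ = (1 + (τ ^ 2)⁻¹ • (Kθᵀ * Kθ) + (σ ^ 2)⁻¹ • (Kθᵀ * Aᵀ * A * Kθ))⁻¹)
    (Kφ : Matrix (Fin d) (Fin m') ℝ)
    (hKφ : Kφ = Sφ * Kθᵀ * ((σ ^ 2)⁻¹ • Aᵀ + (τ ^ 2)⁻¹ • K))
    (bφ : Fin d → ℝ)
    (hbφ : bφ = (Sφ * Kθᵀ).mulVec
      (-(σ ^ 2)⁻¹ • (Aᵀ * A).mulVec m + (τ ^ 2)⁻¹ • ((1 - K * A).mulVec m)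
        - (τ ^ 2)⁻¹ • m)) :
    ∀ y : Fin m' → ℝ,
      Kθ.mulVec (Kφ.mulVec y + bφ) + m = m + K.mulVec (y - A.mulVec m) := by
  have hgain : Kθ * Kφ = K := by
    subst hKθC hK hSφ hKφ
    exact mul_inv_mul_transpose_mul_eq_kalmanGain Kθ A (pow_pos hσ 2) (by positivity)
  have hbias : Kθ *ᵥ bφ = -((K * A) *ᵥ m) := by
    have hv : -(σ ^ 2)⁻¹ • (Aᵀ * A) *ᵥ m + (τ ^ 2)⁻¹ • ((1 - K * A) *ᵥ m) - (τ ^ 2)⁻¹ • m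
        = -((((σ ^ 2)⁻¹ • Aᵀ + (τ ^ 2)⁻¹ • K) * A) *ᵥ m) := by
      simp only [sub_mulVec, add_mulVec, one_mulVec, smul_mulVec, Matrix.add_mul,
        Matrix.smul_mul]
      module
    rw [hbφ, hv, mulVec_neg, mulVec_mulVec, mulVec_neg, mulVec_mulVec,
      ← Matrix.mul_assoc (Sφ * Kθᵀ), ← hKφ, ← Matrix.mul_assoc, hgain]
  intro y
  rw [mulVec_add, mulVec_mulVec, hgain, hbias, mulVec_sub, mulVec_mulVec]
  abel

/-- Posterior mean recovery (Lemma A.6): with `b_θ = m`, `K_θ K_θᵀ = C`, optimal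
`Σ_φ`, `K_φ` and `b_φ`, the expected one-step reconstruction
`K_θ (K_φ y + b_φ) + b_θ` equals the exact Bayesian posterior mean
`m + K (y - A m)` for every `y`. -/
theorem stmt15 {d m' : ℕ} (C : Matrix (Fin d) (Fin d) ℝ) (hC : C.PosDef)
    (A : Matrix (Fin m') (Fin d) ℝ) (σ τ : ℝ) (hσ : 0 < σ) (hτ : 0 < τ)
    (m : Fin d → ℝ)
    (Kθ : Matrix (Fin d) (Fin d) ℝ) (hKθ : IsUnit Kθ.det)
    (hKθC : Kθ * Kθᵀ = C)
    (K : Matrix (Fin d) (Fin m') ℝ)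
    (hK : K = C * Aᵀ * (A * C * Aᵀ + σ ^ 2 • (1 : Matrix (Fin m') (Fin m') ℝ))⁻¹)
    (Sφ : Matrix (Fin d) (Fin d) ℝ)
    (hSφ : Sφ = (1 + (τ ^ 2)⁻¹ • (Kθᵀ * Kθ) + (σ ^ 2)⁻¹ • (Kθᵀ * Aᵀ * A * Kθ))⁻¹)
    (Kφ : Matrix (Fin d) (Fin m') ℝ)
    (hKφ : Kφ = Sφ * Kθᵀ * ((σ ^ 2)⁻¹ • Aᵀ + (τ ^ 2)⁻¹ • K))
    (bφ : Fin d → ℝ)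
    (hbφ : bφ = (Sφ * Kθᵀ).mulVec
      (-(σ ^ 2)⁻¹ • (Aᵀ * A).mulVec m + (τ ^ 2)⁻¹ • ((1 - K * A).mulVec m)
        - (τ ^ 2)⁻¹ • m)) :
    ∀ y : Fin m' → ℝ,
      Kθ.mulVec (Kφ.mulVec y + bφ) + m = m + K.mulVec (y - A.mulVec m) :=
  stmt15_general C A σ τ hσ m Kθ hKθC K hK Sφ hSφ Kφ hKφ bφ hbφ
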